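/- Let φ : A → B be a continuous 3-homomorphism between Banach algebras. Then φ** : A** → B** is a 3-homomorphism with respect to the second Arens product on both biduals: φ**(F ▷ G ▷ H) = φ**(F) ▷ φ**(G) ▷ φ**(H) for all F, G, H ∈ A**. -/
import Mathlib


open ContinuousLinearMap

variable {A : Type*} [NonUnitalNormedRing A] [NormedSpace ℂ A]
  [SMulCommClass ℂ A A] [IsScalarTower ℂ A A] [CompleteSpace A]

/-- `ξ ↦ (x ↦ x·ξ)` where `⟨x·ξ, y⟩ = ⟨ξ, y * x⟩`, as a continuous bilinear map. -/
noncomputable def dualLActCLM : (A →L[ℂ] ℂ) →L[ℂ] A →L[ℂ] (A →L[ℂ] ℂ) :=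
  (((ContinuousLinearMap.compSL A A ℂ (RingHom.id ℂ) (RingHom.id ℂ)).flip).comp
    (ContinuousLinearMap.mul ℂ A).flip).flip

/-- The right action of the bidual on the dual, `⟨ξ·F, x⟩ = ⟨F, x·ξ⟩`, continuous
linear in `ξ`. -/
noncomputable def bidualRActCLM (F : (A →L[ℂ] ℂ) →L[ℂ] ℂ) :
    (A →L[ℂ] ℂ) →L[ℂ] (A →L[ℂ] ℂ) :=
  (ContinuousLinearMap.compSL A (A →L[ℂ] ℂ) ℂ (RingHom.id ℂ) (RingHom.id ℂ) F).comp
    dualLActCLM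

/-- The second Arens product on the bidual: `⟨F ▷ G, ξ⟩ = ⟨G, ξ·F⟩`. -/
noncomputable def arens2 (F G : (A →L[ℂ] ℂ) →L[ℂ] ℂ) : (A →L[ℂ] ℂ) →L[ℂ] ℂ :=
  G.comp (bidualRActCLM F)

/-- The adjoint of a continuous linear map, as a continuous linear map between duals. -/
noncomputable def adjCLM {A B : Type*} [NonUnitalNormedRing A] [NormedSpace ℂ A]
    [NonUnitalNormedRing B] [NormedSpace ℂ B] (φ : A →L[ℂ] B) :
    (B →L[ℂ] ℂ) →L[ℂ] (A →L[ℂ] ℂ) :=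
  (ContinuousLinearMap.compSL A B ℂ (RingHom.id ℂ) (RingHom.id ℂ)).flip φ

/-- The second adjoint `φ** : A** → B**`. -/
noncomputable def bidualMap {A B : Type*} [NonUnitalNormedRing A] [NormedSpace ℂ A]
    [NonUnitalNormedRing B] [NormedSpace ℂ B] (φ : A →L[ℂ] B)
    (F : (A →L[ℂ] ℂ) →L[ℂ] ℂ) : (B →L[ℂ] ℂ) →L[ℂ] ℂ :=
  F.comp (adjCLM φ)

/-- For a continuous 3-homomorphism `φ : A → B` between Banach algebras,
`φ**` is a 3-homomorphism for the second Arens products. -/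
theorem stmt12 {B : Type*} [NonUnitalNormedRing B] [NormedSpace ℂ B]
    [SMulCommClass ℂ B B] [IsScalarTower ℂ B B] [CompleteSpace B]
    (φ : A →L[ℂ] B)
    (h3 : ∀ x y z : A, φ (x * y * z) = φ x * φ y * φ z)
    (F G H : (A →L[ℂ] ℂ) →L[ℂ] ℂ) :
    bidualMap φ (arens2 (arens2 F G) H) =
      arens2 (arens2 (bidualMap φ F) (bidualMap φ G)) (bidualMap φ H) := by
  ext η
  simp only [bidualMap, arens2, bidualRActCLM, adjCLM, dualLActCLM,
    ContinuousLinearMap.coe_comp', Function.comp_apply, ContinuousLinearMap.flip_apply,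
    ContinuousLinearMap.compSL_apply, ContinuousLinearMap.mul_apply']
  congr 1
  ext x
  simp only [ContinuousLinearMap.coe_comp', Function.comp_apply,
    ContinuousLinearMap.flip_apply, ContinuousLinearMap.compSL_apply,
    ContinuousLinearMap.mul_apply']
  congr 1
  ext y
  simp only [ContinuousLinearMap.coe_comp', Function.comp_apply,
    ContinuousLinearMap.flip_apply, ContinuousLinearMap.compSL_apply,
    ContinuousLinearMap.mul_apply']
  congr 1
  ext z
  simp only [ContinuousLinearMap.coe_comp', Function.comp_apply,
    ContinuousLinearMap.flip_apply, ContinuousLinearMap.compSL_apply,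
    ContinuousLinearMap.mul_apply', h3]
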